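/- arXiv:1809.01902 — 3 statements merged into one kernel-verified Lean document; each statement's English description precedes it below -/
import Mathlib

section
/- The improper integral ∫_{0}^{∞} (1 − λ·arctan(1/λ)) dλ converges and equals π/4. -/
/-!
The function `F x = x / 2 - (x ^ 2 + 1) / 2 * (π / 2 - arctan x)` has derivative
`1 - x * (π / 2 - arctan x)`, which for `x > 0` is the integrand since `arctan (1 / x) = π / 2 - arctan x`.
The integrand is nonnegative because `arctan y ≤ y` for `y ≥ 0`, so the improper integral is
`lim_{x → ∞} F x - F 0 = 0 - (-π / 4)`. The limit comes from `y - y ^ 3 / 3 ≤ arctan y ≤ y` at `y = 1 / x`,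
which squeezes `F x` between `-1 / (2 x)` and `0` for `x ≥ 1`.
-/

open Real MeasureTheory Filter Topology Set

namespace Real

lemma arctan_le_self {x : ℝ} (hx : 0 ≤ x) : arctan x ≤ x := by
  have hmono : Monotone fun t => t - arctan t :=
    monotone_of_hasDerivAt_nonneg (f' := fun t => t ^ 2 / (1 + t ^ 2))
      (fun t => ((hasDerivAt_id t).sub (hasDerivAt_arctan t)).congr_deriv (by field_simp; ring))
      (fun t => by positivity)
  simpa using hmono hx

lemma sub_pow_three_div_three_le_arctan {x : ℝ} (hx : 0 ≤ x) : x - x ^ 3 / 3 ≤ arctan x := by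
  have hmono : Monotone fun t => arctan t - (t - t ^ 3 / 3) :=
    monotone_of_hasDerivAt_nonneg (f' := fun t => t ^ 4 / (1 + t ^ 2))
      (fun t => ((hasDerivAt_arctan t).sub ((hasDerivAt_id t).sub
        ((hasDerivAt_pow 3 t).div_const 3))).congr_deriv (by field_simp; ring))
      (fun t => by positivity)
  simpa using hmono hx

end Real

lemma one_sub_mul_arctan_one_div_nonneg {x : ℝ} (hx : 0 ≤ x) : 0 ≤ 1 - x * arctan (1 / x) := by
  rcases hx.eq_or_lt with rfl | hx
  · simp
  have := mul_le_mul_of_nonneg_left (arctan_le_self (one_div_nonneg.2 hx.le)) hx.le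
  rw [mul_one_div_cancel hx.ne'] at this
  linarith

noncomputable def primitiveOneSubMulArctanInv (x : ℝ) : ℝ :=
  x / 2 - (x ^ 2 + 1) / 2 * (π / 2 - arctan x)

lemma continuous_primitiveOneSubMulArctanInv : Continuous primitiveOneSubMulArctanInv := by
  unfold primitiveOneSubMulArctanInv
  fun_prop

lemma hasDerivAt_primitiveOneSubMulArctanInv (x : ℝ) :
    HasDerivAt primitiveOneSubMulArctanInv (1 - x * (π / 2 - arctan x)) x := by
  have hsq : HasDerivAt (fun t : ℝ => (t ^ 2 + 1) / 2) x x :=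
    (((hasDerivAt_pow 2 x).add_const 1).div_const 2).congr_deriv (by ring)
  refine (((hasDerivAt_id x).div_const 2).sub
    (hsq.mul ((hasDerivAt_arctan x).const_sub (π / 2)))).congr_deriv ?_
  field_simp
  ring

lemma hasDerivAt_primitiveOneSubMulArctanInv_of_pos {x : ℝ} (hx : 0 < x) :
    HasDerivAt primitiveOneSubMulArctanInv (1 - x * arctan (1 / x)) x := by
  rw [one_div, arctan_inv_of_pos hx]
  exact hasDerivAt_primitiveOneSubMulArctanInv x

lemma primitiveOneSubMulArctanInv_mem_Icc {x : ℝ} (hx : 1 ≤ x) :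
    primitiveOneSubMulArctanInv x ∈ Icc (-(1 / 2) * x⁻¹) 0 := by
  have hx0 : 0 < x := one_pos.trans_le hx
  have hF : primitiveOneSubMulArctanInv x = x / 2 - (x ^ 2 + 1) / 2 * arctan x⁻¹ := by
    rw [primitiveOneSubMulArctanInv, arctan_inv_of_pos hx0]
  have hup := arctan_le_self (inv_nonneg.2 hx0.le)
  have hlo := sub_pow_three_div_three_le_arctan (inv_nonneg.2 hx0.le)
  have hc : 0 ≤ (x ^ 2 + 1) / 2 := by positivity
  constructor
  · calc -(1 / 2) * x⁻¹ = x / 2 - (x ^ 2 + 1) / 2 * x⁻¹ := by field_simp; ring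
      _ ≤ _ := by rw [hF]; gcongr
  · calc primitiveOneSubMulArctanInv x
        ≤ x / 2 - (x ^ 2 + 1) / 2 * (x⁻¹ - x⁻¹ ^ 3 / 3) := by rw [hF]; gcongr
      _ = -(2 * x ^ 2 - 1) / (6 * x ^ 3) := by field_simp; ring
      _ ≤ 0 := div_nonpos_of_nonpos_of_nonneg (by nlinarith) (by positivity)

lemma primitiveOneSubMulArctanInv_zero : primitiveOneSubMulArctanInv 0 = -(π / 4) := by
  norm_num [primitiveOneSubMulArctanInv]
  ring

lemma tendsto_primitiveOneSubMulArctanInv_atTop :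
    Tendsto primitiveOneSubMulArctanInv atTop (𝓝 0) := by
  have hlower : Tendsto (fun x : ℝ => -(1 / 2) * x⁻¹) atTop (𝓝 0) := by
    simpa using tendsto_inv_atTop_zero.const_mul (-(1 / 2) : ℝ)
  refine tendsto_of_tendsto_of_tendsto_of_le_of_le' hlower tendsto_const_nhds ?_ ?_ <;>
    filter_upwards [eventually_ge_atTop (1 : ℝ)] with x hx
  exacts [(primitiveOneSubMulArctanInv_mem_Icc hx).1, (primitiveOneSubMulArctanInv_mem_Icc hx).2]

/-- The improper integral `∫₀^∞ (1 − λ·arctan(1/λ)) dλ` converges and equals `π/4`. -/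
theorem integral_one_sub_arctan :
    IntegrableOn (fun lam : ℝ => 1 - lam * Real.arctan (1 / lam)) (Set.Ioi 0) volume ∧
    ∫ lam in Set.Ioi (0:ℝ), (1 - lam * Real.arctan (1 / lam)) = π / 4 := by
  have hcont := continuous_primitiveOneSubMulArctanInv.continuousWithinAt (s := Ici 0) (x := 0)
  have hderiv : ∀ x ∈ Ioi (0 : ℝ),
      HasDerivAt primitiveOneSubMulArctanInv (1 - x * arctan (1 / x)) x :=
    fun _ hx => hasDerivAt_primitiveOneSubMulArctanInv_of_pos hx
  have hnonneg : ∀ x ∈ Ioi (0 : ℝ), 0 ≤ 1 - x * arctan (1 / x) :=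
    fun _ hx => one_sub_mul_arctan_one_div_nonneg (le_of_lt hx)
  have hlim := tendsto_primitiveOneSubMulArctanInv_atTop
  refine ⟨integrableOn_Ioi_deriv_of_nonneg hcont hderiv hnonneg hlim, ?_⟩
  rw [integral_Ioi_of_hasDerivAt_of_nonneg hcont hderiv hnonneg hlim,
    primitiveOneSubMulArctanInv_zero, zero_sub, neg_neg]
end

section
/- For every positive semidefinite Hermitian n×n matrix A, the matrix square root satisfies √A = (2/π) ∫_{0}^{∞} ( I − λ²·(A + λ²·I)⁻¹ ) dλ, where the integral converges entrywise as an improper Riemann integral. -/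
/-!
Functional calculus turns `I − λ²(A + λ²I)⁻¹` into `f_λ(A)` with `f_λ(x) = x / (x + λ²)`.
Each entry of `g(A)` is a fixed linear combination of the values of `g` at the eigenvalues,
so the integral may be taken eigenvalue by eigenvalue, where it is the scalar identity
`∫₀^∞ x / (x + λ²) dλ = (π/2)√x`: substitute `λ = √x s` in `∫₀^∞ (1 + s²)⁻¹ ds = π/2`.
-/

open Matrix MeasureTheory
open scoped ComplexOrder

/-- The square root of a positive semidefinite matrix, as defined in the older Mathlib
(`Matrix.PosSemidef.sqrt`, since removed). -/
noncomputable def Matrix.PosSemidef.sqrt {n 𝕜 : Type*} [Fintype n] [DecidableEq n] [RCLike 𝕜]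
    {A : Matrix n n 𝕜} (hA : A.PosSemidef) : Matrix n n 𝕜 :=
  hA.1.eigenvectorUnitary.1 * diagonal ((↑) ∘ Real.sqrt ∘ hA.1.eigenvalues) *
  (star hA.1.eigenvectorUnitary : Matrix n n 𝕜)

open Set

namespace Real

lemma div_add_sq_eq_inv_one_add_sq {x : ℝ} (hx : 0 < x) (t : ℝ) :
    x / (x + t ^ 2) = (1 + ((√x)⁻¹ * t) ^ 2)⁻¹ := by
  have hsqrt : √x ^ 2 = x := sq_sqrt hx.le
  have : √x ≠ 0 := (sqrt_pos.mpr hx).ne'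
  rw [mul_pow, inv_pow, hsqrt]
  field_simp

lemma integrableOn_div_add_sq_Ioi {x : ℝ} (hx : 0 ≤ x) :
    IntegrableOn (fun t => x / (x + t ^ 2)) (Ioi 0) := by
  rcases hx.eq_or_lt with rfl | hx
  · simp
  simp_rw [div_add_sq_eq_inv_one_add_sq hx]
  exact (integrableOn_Ioi_comp_mul_left_iff (fun s => (1 + s ^ 2)⁻¹) 0 (by positivity)).mpr
    integrable_inv_one_add_sq.integrableOn

lemma integral_div_add_sq_Ioi {x : ℝ} (hx : 0 ≤ x) :
    ∫ t in Ioi 0, x / (x + t ^ 2) = π / 2 * √x := by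
  rcases hx.eq_or_lt with rfl | hx
  · simp
  simp_rw [div_add_sq_eq_inv_one_add_sq hx]
  rw [integral_comp_mul_left_Ioi (fun s => (1 + s ^ 2)⁻¹) 0 (by positivity), mul_zero,
    integral_Ioi_inv_one_add_sq, arctan_zero, inv_inv, smul_eq_mul]
  ring

end Real

lemma Matrix.PosSemidef.nonneg_of_mem_spectrum {n 𝕜 : Type*} [Fintype n] [DecidableEq n]
    [RCLike 𝕜] {A : Matrix n n 𝕜} (hA : A.PosSemidef) {x : ℝ} (hx : x ∈ spectrum ℝ A) :
    0 ≤ x := by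
  obtain ⟨k, rfl⟩ := hA.1.spectrum_real_eq_range_eigenvalues ▸ hx
  exact hA.eigenvalues_nonneg k

namespace Matrix.IsHermitian

variable {n 𝕜 : Type*} [Fintype n] [DecidableEq n] [RCLike 𝕜] {A : Matrix n n 𝕜}
  (hA : A.IsHermitian)
include hA

lemma cfc_apply_eq_sum (f : ℝ → ℝ) (i j : n) :
    cfc f A i j = ∑ k, (hA.eigenvectorUnitary : Matrix n n 𝕜) i k *
      star ((hA.eigenvectorUnitary : Matrix n n 𝕜) j k) * (f (hA.eigenvalues k) : 𝕜) := by
  rw [hA.cfc_eq, IsHermitian.cfc, Unitary.conjStarAlgAut_apply, mul_apply]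
  refine Finset.sum_congr rfl fun k _ => ?_
  simp only [mul_diagonal, star_apply, Function.comp_apply]
  ring

section Integral

variable {X : Type*} [MeasurableSpace X] {μ : Measure X} {f : X → ℝ → ℝ}

lemma integrable_cfc_apply (hf : ∀ x ∈ spectrum ℝ A, Integrable (fun t => f t x) μ)
    (i j : n) : Integrable (fun t => cfc (f t) A i j) μ := by
  simp_rw [hA.cfc_apply_eq_sum]
  exact integrable_finsetSum _ fun k _ =>
    (hf _ (hA.eigenvalues_mem_spectrum_real k)).ofReal.const_mul _

lemma integral_cfc_apply (hf : ∀ x ∈ spectrum ℝ A, Integrable (fun t => f t x) μ) (i j : n) :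
    ∫ t, cfc (f t) A i j ∂μ = cfc (fun x => ∫ t, f t x ∂μ) A i j := by
  simp_rw [hA.cfc_apply_eq_sum]
  rw [integral_finsetSum _ fun k _ =>
    (hf _ (hA.eigenvalues_mem_spectrum_real k)).ofReal.const_mul _]
  simp_rw [integral_const_mul, integral_ofReal]

end Integral

lemma inv_add_smul_one_eq_cfc {c : ℝ} (hc : ∀ x ∈ spectrum ℝ A, x + c ≠ 0) :
    (A + (c : 𝕜) • 1)⁻¹ = cfc (fun x => (x + c)⁻¹) A := by
  have hcont := A.finite_real_spectrum.continuousOn (Y := ℝ)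
  have hsum : A + (c : 𝕜) • 1 = cfc (· + c) A := by
    rw [cfc_add_const c (fun x => x) A (hcont _), cfc_id' ℝ A, Algebra.algebraMap_eq_smul_one,
      RCLike.real_smul_eq_coe_smul (K := 𝕜)]
  refine inv_eq_left_inv ?_
  rw [hsum, ← cfc_mul _ _ A (hcont _) (hcont _), ← cfc_one ℝ A]
  exact cfc_congr fun x hx => inv_mul_cancel₀ (hc x hx)

lemma one_sub_smul_inv_add_smul_one_eq_cfc {c : ℝ} (hc : ∀ x ∈ spectrum ℝ A, x + c ≠ 0) :
    1 - (c : 𝕜) • (A + (c : 𝕜) • 1)⁻¹ = cfc (fun x => x / (x + c)) A := by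
  have hcont := A.finite_real_spectrum.continuousOn (Y := ℝ)
  rw [hA.inv_add_smul_one_eq_cfc hc, ← RCLike.real_smul_eq_coe_smul,
    ← cfc_const_mul _ _ A (hcont _), ← cfc_one ℝ A, ← cfc_sub _ _ A (hcont _) (hcont _)]
  refine cfc_congr fun x hx => ?_
  rw [Pi.one_apply]
  field_simp [hc x hx]
  ring

end Matrix.IsHermitian

/-- Integral representation of the matrix square root: for every positive semidefinite
Hermitian matrix `A`, `√A = (2/π) ∫₀^∞ (I − λ²(A + λ²I)⁻¹) dλ`, where the improper
integral converges entrywise. -/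
theorem sqrt_eq_integral {n : ℕ} (A : Matrix (Fin n) (Fin n) ℂ) (hA : A.PosSemidef) :
    ∀ i j : Fin n,
      IntegrableOn
        (fun lam : ℝ =>
          ((1 : Matrix (Fin n) (Fin n) ℂ)
            - ((lam : ℂ) ^ 2) • (A + ((lam : ℂ) ^ 2) • (1 : Matrix (Fin n) (Fin n) ℂ))⁻¹) i j)
        (Set.Ioi 0) volume ∧
      hA.sqrt i j = (2 / Real.pi : ℂ) *
        ∫ lam in Set.Ioi (0:ℝ),
          ((1 : Matrix (Fin n) (Fin n) ℂ)
            - ((lam : ℂ) ^ 2) • (A + ((lam : ℂ) ^ 2) • (1 : Matrix (Fin n) (Fin n) ℂ))⁻¹) i j := by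
  intro i j
  have hint : ∀ x ∈ spectrum ℝ A, IntegrableOn (fun t : ℝ => x / (x + t ^ 2)) (Ioi 0) :=
    fun x hx => Real.integrableOn_div_add_sq_Ioi (hA.nonneg_of_mem_spectrum hx)
  have hres : EqOn
      (fun t : ℝ => (1 - ((t : ℂ) ^ 2) • (A + ((t : ℂ) ^ 2) • (1 : Matrix (Fin n) (Fin n) ℂ))⁻¹) i j)
      (fun t => cfc (fun x => x / (x + t ^ 2)) A i j) (Ioi 0) := fun t ht => by
    have hc : ∀ x ∈ spectrum ℝ A, x + t ^ 2 ≠ 0 := fun x hx =>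
      (add_pos_of_nonneg_of_pos (hA.nonneg_of_mem_spectrum hx) (pow_pos ht 2)).ne'
    simpa using congrArg (· i j) (hA.1.one_sub_smul_inv_add_smul_one_eq_cfc (𝕜 := ℂ) hc)
  have hsqrt : hA.sqrt = cfc Real.sqrt A := (hA.1.cfc_eq _).symm
  refine ⟨IntegrableOn.congr_fun (hA.1.integrable_cfc_apply (f := fun t x => x / (x + t ^ 2))
    hint i j) hres.symm measurableSet_Ioi, ?_⟩
  rw [setIntegral_congr_fun measurableSet_Ioi hres,
    hA.1.integral_cfc_apply (f := fun t x => x / (x + t ^ 2)) hint,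
    cfc_congr fun x hx => Real.integral_div_add_sq_Ioi (hA.nonneg_of_mem_spectrum hx),
    cfc_const_mul _ _ A (A.finite_real_spectrum.continuousOn _), hsqrt]
  simp only [Matrix.smul_apply, Complex.real_smul]
  push_cast
  field_simp
end

section
/- Gauss counting with corridors: let k_F > 0, R > 0, and consider the spherical collar C := { x ∈ ℝ³ : k_F − R ≤ |x| ≤ k_F + R, |x̂·ê| ≤ N^{−δ} } for a fixed unit vector ê and parameters N ≥ 1, δ > 0 with k_F = κN^{1/3}, κ bounded. Then the number of lattice points of ℤ³ in C is at most C'·(N^{2/3−δ} + N^{1/3}) for a constant C' depending only on R and κ. -/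
open Function MeasureTheory Set Metric Real
open scoped RealInnerProductSpace ENNReal

/-!
Gauss' argument: the unit cubes `v + [0,1)³` of the lattice points `v` of the collar are disjoint
and lie within distance `√3 ≤ 2` of `v`, so they fit into the collar fattened by `2`, and their
number is at most its volume. After a rotation taking `ê` to the first axis, every slice of the
shell `a ≤ |x| ≤ b` orthogonal to that axis is a planar annulus of area at most `π (b² - a²)`,
so a collar cut by the slab `|x·ê| ≤ T` has volume at most `2T · π (b² - a²) ≤ 4π T b (b - a)`.
With `b - a = 2(R + 2)`, `b = O(N^{1/3})` and `T = O(N^{1/3-δ} + 1)` this is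
`O(N^{2/3-δ} + N^{1/3})`.
-/

noncomputable section

namespace CollarCount

section UnitCube

variable {ι : Type*}

def unitCube (v : ι → ℤ) : Set (ι → ℝ) :=
  univ.pi fun i => Ico (v i : ℝ) (v i + 1)

lemma mem_unitCube {v : ι → ℤ} {x : ι → ℝ} : x ∈ unitCube v ↔ ∀ i, ⌊x i⌋ = v i := by
  simp [unitCube, Int.floor_eq_iff]

lemma measurableSet_unitCube [Countable ι] (v : ι → ℤ) : MeasurableSet (unitCube v) :=
  .univ_pi fun _ => measurableSet_Ico

lemma volume_unitCube [Fintype ι] (v : ι → ℤ) : volume (unitCube v) = 1 := by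
  simp [unitCube, volume_pi_pi]

lemma pairwise_disjoint_unitCube : Pairwise (Disjoint on (unitCube : (ι → ℤ) → Set (ι → ℝ))) :=
  fun _ _ hvw => disjoint_left.2 fun _ hv hw =>
    hvw <| funext fun i => (mem_unitCube.1 hv i).symm.trans (mem_unitCube.1 hw i)

theorem ncard_le_volume_of_unitCube_subset [Fintype ι] {S : Set (ι → ℤ)} {A : Set (ι → ℝ)}
    (h : ∀ v ∈ S, unitCube v ⊆ A) : (S.ncard : ℝ≥0∞) ≤ volume A := by
  rcases S.finite_or_infinite with hS | hS
  · lift S to Finset (ι → ℤ) using hS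
    calc (S : Set (ι → ℤ)).ncard = ∑ v ∈ S, volume (unitCube v) := by
          simp [volume_unitCube]
      _ = volume (⋃ v ∈ S, unitCube v) :=
          (measure_biUnion_finset (pairwise_disjoint_unitCube.pairwiseDisjoint _)
            fun v _ => measurableSet_unitCube v).symm
      _ ≤ volume A := measure_mono (iUnion₂_subset h)
  · simp [hS.ncard]

lemma norm_toLp_sub_le_of_mem_unitCube [Fintype ι] {v : ι → ℤ} {x : ι → ℝ}
    (hx : x ∈ unitCube v) :
    ‖WithLp.toLp 2 x - WithLp.toLp 2 (fun i => (v i : ℝ))‖ ≤ √(Fintype.card ι) := by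
  rw [EuclideanSpace.norm_eq]
  refine Real.sqrt_le_sqrt ?_
  calc ∑ i, ‖(WithLp.toLp 2 x - WithLp.toLp 2 (fun i => (v i : ℝ))) i‖ ^ 2
      ≤ ∑ _i : ι, (1 : ℝ) := Finset.sum_le_sum fun i _ => by
        have := mem_unitCube.1 hx i
        simp only [PiLp.sub_apply, Real.norm_eq_abs, sq_abs, ← this]
        nlinarith [Int.floor_le (x i), Int.lt_floor_add_one (x i)]
    _ = Fintype.card ι := by simp

end UnitCube

lemma norm_toLp_eq_sqrt {ι : Type*} [Fintype ι] (x : ι → ℝ) :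
    ‖WithLp.toLp 2 x‖ = √(∑ i, x i ^ 2) := by
  simp [EuclideanSpace.norm_eq]

lemma inner_toLp_toLp {ι : Type*} [Fintype ι] (x y : ι → ℝ) :
    ⟪WithLp.toLp 2 x, WithLp.toLp 2 y⟫ = ∑ i, x i * y i := by
  simp [PiLp.inner_apply, mul_comm]

section Collar

variable {E : Type*} [NormedAddCommGroup E] [InnerProductSpace ℝ E]

def collar (u : E) (a b T : ℝ) : Set E :=
  {z | a ≤ ‖z‖ ∧ ‖z‖ ≤ b ∧ |⟪z, u⟫| ≤ T}

lemma mem_collar_of_norm_sub_le {u x z : E} {a b T r : ℝ} (hu : ‖u‖ ≤ 1)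
    (hz : z ∈ collar u a b T) (hxz : ‖x - z‖ ≤ r) : x ∈ collar u (a - r) (b + r) (T + r) := by
  obtain ⟨hza, hzb, hzT⟩ := hz
  have hinner : |⟪x - z, u⟫| ≤ r :=
    (abs_real_inner_le_norm _ _).trans <| by nlinarith [norm_nonneg (x - z), norm_nonneg u]
  refine ⟨?_, ?_, ?_⟩
  · linarith [norm_sub_norm_le z x, norm_sub_rev x z]
  · linarith [norm_le_norm_add_norm_sub' x z]
  · have : ⟪x, u⟫ = ⟪z, u⟫ + ⟪x - z, u⟫ := by rw [← inner_add_left, add_sub_cancel]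
    rw [this]
    linarith [abs_add_le ⟪z, u⟫ ⟪x - z, u⟫]

lemma isClosed_collar (u : E) (a b T : ℝ) : IsClosed (collar u a b T) :=
  (isClosed_le continuous_const continuous_norm).inter <|
    (isClosed_le continuous_norm continuous_const).inter <|
      isClosed_le (f := fun z => |⟪z, u⟫|) (by fun_prop) continuous_const

variable [FiniteDimensional ℝ E] [MeasurableSpace E] [BorelSpace E]

lemma volume_collar_congr {u w : E} (h : ‖u‖ = ‖w‖) (a b T : ℝ) :
    volume (collar u a b T) = volume (collar w a b T) := by
  set f := Submodule.reflection (ℝ ∙ (u - w))ᗮ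
  have hfu : f u = w := Submodule.reflection_sub h
  have hpre : f ⁻¹' collar w a b T = collar u a b T := by
    ext z
    simp only [collar, mem_preimage, mem_ofPred_eq, f.norm_map, ← hfu, f.inner_map_map]
  rw [← hpre]
  exact f.measurePreserving.measure_preimage
    (isClosed_collar w a b T).measurableSet.nullMeasurableSet

end Collar

lemma volume_annulus_le {c d : ℝ} (hcd : c ≤ d) :
    volume {y : EuclideanSpace ℝ (Fin 2) | c ≤ ‖y‖ ^ 2 ∧ ‖y‖ ^ 2 ≤ d} ≤
      ENNReal.ofReal (π * (d - c)) := by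
  have hsub : {y : EuclideanSpace ℝ (Fin 2) | c ≤ ‖y‖ ^ 2 ∧ ‖y‖ ^ 2 ≤ d} ⊆
      closedBall 0 √d \ ball 0 √c := fun y ⟨hc, hd⟩ => by
    simp only [mem_sdiff, mem_closedBall, mem_ball, dist_zero_right, not_lt]
    rw [← sqrt_sq (norm_nonneg y)]
    exact ⟨sqrt_le_sqrt hd, sqrt_le_sqrt hc⟩
  have hball : ball (0 : EuclideanSpace ℝ (Fin 2)) √c ⊆ closedBall 0 √d :=
    (ball_subset_ball (sqrt_le_sqrt hcd)).trans ball_subset_closedBall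
  calc _ ≤ volume (closedBall (0 : EuclideanSpace ℝ (Fin 2)) √d \ ball 0 √c) :=
        measure_mono hsub
    _ = volume (closedBall (0 : EuclideanSpace ℝ (Fin 2)) √d) - volume (ball 0 √c) :=
        measure_sdiff hball measurableSet_ball.nullMeasurableSet measure_ball_lt_top.ne
    _ = ENNReal.ofReal (π * max d 0) - ENNReal.ofReal (π * max c 0) := by
        simp only [EuclideanSpace.volume_closedBall_fin_two, EuclideanSpace.volume_ball_fin_two,
          ← ENNReal.ofReal_pow (sqrt_nonneg _), sq_sqrt', ← ENNReal.ofReal_mul' pi_nonneg,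
          mul_comm]
    _ ≤ ENNReal.ofReal (π * (d - c)) := by
        rw [← ENNReal.ofReal_sub _ (by positivity), ← mul_sub]
        refine ENNReal.ofReal_le_ofReal (mul_le_mul_of_nonneg_left ?_ pi_nonneg)
        simpa [sub_nonneg.2 hcd] using max_sub_max_le_max d 0 c 0

lemma measurePreserving_head_tail :
    MeasurePreserving
      (fun z : EuclideanSpace ℝ (Fin 3) => (z 0, WithLp.toLp 2 fun j : Fin 2 => z j.succ))
      volume (volume.prod volume) :=
  (((MeasurePreserving.id volume).prod (PiLp.volume_preserving_toLp (Fin 2))).comp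
    (volume_preserving_piFinSuccAbove (fun _ => ℝ) 0)).comp (PiLp.volume_preserving_ofLp (Fin 3))

lemma volume_shell_inter_slab_le {c d : ℝ} (hcd : c ≤ d) (T : ℝ) :
    volume {z : EuclideanSpace ℝ (Fin 3) | c ≤ ‖z‖ ^ 2 ∧ ‖z‖ ^ 2 ≤ d ∧ |z 0| ≤ T} ≤
      ENNReal.ofReal (π * (d - c) * (2 * T)) := by
  set P : Set (ℝ × EuclideanSpace ℝ (Fin 2)) :=
    {p | c ≤ p.1 ^ 2 + ‖p.2‖ ^ 2 ∧ p.1 ^ 2 + ‖p.2‖ ^ 2 ≤ d ∧ |p.1| ≤ T}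
  have hP : MeasurableSet P := by
    have hc : Continuous fun p : ℝ × EuclideanSpace ℝ (Fin 2) => p.1 ^ 2 + ‖p.2‖ ^ 2 := by
      fun_prop
    exact ((isClosed_le continuous_const hc).inter ((isClosed_le hc continuous_const).inter
      (isClosed_le continuous_fst.abs continuous_const))).measurableSet
  have hpre :
      (fun z : EuclideanSpace ℝ (Fin 3) => (z 0, WithLp.toLp 2 fun j : Fin 2 => z j.succ)) ⁻¹' P =
        {z | c ≤ ‖z‖ ^ 2 ∧ ‖z‖ ^ 2 ≤ d ∧ |z 0| ≤ T} := by
    ext z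
    simp [P, EuclideanSpace.real_norm_sq_eq, Fin.sum_univ_succ]
  have hslice (s : ℝ) : volume (Prod.mk s ⁻¹' P) ≤
      (Icc (-T) T).indicator (fun _ => ENNReal.ofReal (π * (d - c))) s := by
    by_cases hs : s ∈ Icc (-T) T
    · rw [indicator_of_mem hs]
      calc volume (Prod.mk s ⁻¹' P)
          ≤ volume {y : EuclideanSpace ℝ (Fin 2) | c - s ^ 2 ≤ ‖y‖ ^ 2 ∧ ‖y‖ ^ 2 ≤ d - s ^ 2} :=
            measure_mono fun y hy => ⟨by linarith [hy.1], by linarith [hy.2.1]⟩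
        _ ≤ ENNReal.ofReal (π * (d - s ^ 2 - (c - s ^ 2))) := volume_annulus_le (by linarith)
        _ = ENNReal.ofReal (π * (d - c)) := by ring_nf
    · rw [indicator_of_notMem hs]
      exact (measure_mono (t := ∅) fun y hy => hs (abs_le.1 hy.2.2)).trans (by simp)
  rw [← hpre, measurePreserving_head_tail.measure_preimage hP.nullMeasurableSet,
    Measure.prod_apply hP]
  refine (lintegral_mono hslice).trans ?_
  rw [lintegral_indicator measurableSet_Icc, setLIntegral_const, Real.volume_Icc,
    ← ENNReal.ofReal_mul (mul_nonneg pi_nonneg (sub_nonneg.2 hcd)), show T - -T = 2 * T by ring]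

lemma volume_collar_le {u : EuclideanSpace ℝ (Fin 3)} (hu : ‖u‖ = 1) {a b T : ℝ} (hab : a ≤ b)
    (hb : 0 ≤ b) (hT : 0 ≤ T) :
    volume (collar u a b T) ≤ ENNReal.ofReal (4 * π * T * b * (b - a)) := by
  rw [volume_collar_congr (w := EuclideanSpace.single 0 1) (by simp [hu])]
  have ha' : max a 0 ≤ b := max_le hab hb
  have harea : π * (b ^ 2 - max a 0 ^ 2) * (2 * T) ≤ 4 * π * T * b * (b - a) := by
    have : b ^ 2 - max a 0 ^ 2 ≤ (b - a) * (2 * b) := by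
      nlinarith [le_max_left a 0, le_max_right a 0]
    calc π * (b ^ 2 - max a 0 ^ 2) * (2 * T) = 2 * π * T * (b ^ 2 - max a 0 ^ 2) := by ring
      _ ≤ 2 * π * T * ((b - a) * (2 * b)) := by gcongr
      _ = 4 * π * T * b * (b - a) := by ring
  calc volume (collar (EuclideanSpace.single 0 1) a b T)
      ≤ volume {z : EuclideanSpace ℝ (Fin 3) |
          max a 0 ^ 2 ≤ ‖z‖ ^ 2 ∧ ‖z‖ ^ 2 ≤ b ^ 2 ∧ |z 0| ≤ T} :=
        measure_mono fun z ⟨hza, hzb, hzT⟩ =>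
          ⟨by gcongr; exact max_le hza (norm_nonneg z), by gcongr,
            by simpa [EuclideanSpace.inner_single_right] using hzT⟩
    _ ≤ ENNReal.ofReal (π * (b ^ 2 - max a 0 ^ 2) * (2 * T)) :=
        volume_shell_inter_slab_le (by gcongr) T
    _ ≤ ENNReal.ofReal (4 * π * T * b * (b - a)) := ENNReal.ofReal_le_ofReal harea

lemma collar_volume_bound_le {R κ κ₀ δ N : ℝ} (hR : 0 < R) (hκ : 0 < κ) (hκκ₀ : κ ≤ κ₀)
    (hδ : 0 < δ) (hN : 1 ≤ N) :
    4 * π * (N ^ (-δ) * (κ * N ^ ((1:ℝ)/3) + R) + 2) * (κ * N ^ ((1:ℝ)/3) + R + 2) *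
        (κ * N ^ ((1:ℝ)/3) + R + 2 - (κ * N ^ ((1:ℝ)/3) - R - 2))
      ≤ 8 * π * (R + 2) * (κ₀ + R + 2) ^ 2 * (N ^ ((2:ℝ)/3 - δ) + N ^ ((1:ℝ)/3)) := by
  set n := N ^ ((1:ℝ)/3)
  set u := N ^ (-δ)
  have hN0 : 0 < N := one_pos.trans_le hN
  have hn : 1 ≤ n := one_le_rpow hN (by norm_num)
  have hu0 : 0 ≤ u := by positivity
  have hu1 : u ≤ 1 := rpow_le_one_of_one_le_of_nonpos hN (by linarith)
  have hun : u * n ^ 2 = N ^ ((2:ℝ)/3 - δ) := by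
    rw [← rpow_natCast, ← rpow_mul hN0.le, ← rpow_add hN0]; ring_nf
  have hκ₀ : 0 < κ₀ := hκ.trans_le hκκ₀
  set K := κ₀ + R + 2
  have hT : u * (κ * n + R) + 2 ≤ K * (u * n + 1) := by
    nlinarith [mul_le_mul_of_nonneg_left hκκ₀ (by positivity : 0 ≤ u * n),
      mul_le_mul_of_nonneg_right hu1 hR.le, mul_nonneg (by positivity : 0 ≤ R + 2)
      (by positivity : 0 ≤ u * n)]
  have hb : κ * n + R + 2 ≤ K * n := by
    nlinarith [mul_le_mul_of_nonneg_right hκκ₀ (by positivity : 0 ≤ n)]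
  have hK0 : 0 ≤ K := by positivity
  rw [← hun]
  calc 4 * π * (u * (κ * n + R) + 2) * (κ * n + R + 2) * (κ * n + R + 2 - (κ * n - R - 2))
      = 8 * π * (R + 2) * ((u * (κ * n + R) + 2) * (κ * n + R + 2)) := by ring
    _ ≤ 8 * π * (R + 2) * ((K * (u * n + 1)) * (K * n)) := by gcongr
    _ = 8 * π * (R + 2) * K ^ 2 * (u * n ^ 2 + n) := by ring

end CollarCount

end

open CollarCount

/-- Gauss counting with corridors: the number of points of `ℤ³` in the spherical collar
`{x : k_F − R ≤ |x| ≤ k_F + R, |x̂·ê| ≤ N^{−δ}}`, with `k_F = κN^{1/3}` and `κ ≤ κ₀`,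
is at most `C'(N^{2/3−δ} + N^{1/3})` for a constant `C'` depending only on `R, κ₀`. -/
theorem collar_lattice_count (R κ₀ : ℝ) (hR : 0 < R) (hκ₀ : 0 < κ₀) :
    ∃ C' : ℝ, 0 < C' ∧
      ∀ N : ℝ, 1 ≤ N → ∀ κ : ℝ, 0 < κ → κ ≤ κ₀ → ∀ δ : ℝ, 0 < δ →
      ∀ e : Fin 3 → ℝ, (∑ i, e i ^ 2) = 1 →
      (Set.ncard {v : Fin 3 → ℤ |
          κ * N ^ ((1:ℝ)/3) - R ≤ Real.sqrt (∑ i, ((v i : ℝ)) ^ 2) ∧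
          Real.sqrt (∑ i, ((v i : ℝ)) ^ 2) ≤ κ * N ^ ((1:ℝ)/3) + R ∧
          |∑ i, (v i : ℝ) * e i| ≤ N ^ (-δ) * Real.sqrt (∑ i, ((v i : ℝ)) ^ 2)} : ℝ)
        ≤ C' * (N ^ ((2:ℝ)/3 - δ) + N ^ ((1:ℝ)/3)) := by
  refine ⟨8 * π * (R + 2) * (κ₀ + R + 2) ^ 2, by positivity, ?_⟩
  intro N hN κ hκ hκκ₀ δ hδ e he
  set k := κ * N ^ ((1:ℝ)/3)
  set u := N ^ (-δ)
  have he' : ‖WithLp.toLp 2 e‖ = 1 := by rw [norm_toLp_eq_sqrt, he, sqrt_one]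
  set K := collar (WithLp.toLp 2 e) (k - R - 2) (k + R + 2) (u * (k + R) + 2)
  rw [← ENNReal.ofReal_le_ofReal_iff (by positivity), ENNReal.ofReal_natCast]
  refine (ncard_le_volume_of_unitCube_subset (A := WithLp.toLp 2 ⁻¹' K) ?_).trans ?_
  · rintro v ⟨hlo, hhi, hang⟩ x hx
    have hv : WithLp.toLp 2 (fun i => (v i : ℝ)) ∈ collar (WithLp.toLp 2 e) (k - R) (k + R)
        (u * (k + R)) := by
      simp only [collar, mem_ofPred_eq, norm_toLp_eq_sqrt, inner_toLp_toLp]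
      exact ⟨hlo, hhi, hang.trans (by gcongr)⟩
    exact mem_collar_of_norm_sub_le he'.le hv <|
      (norm_toLp_sub_le_of_mem_unitCube hx).trans <| by norm_num [sqrt_le_left]
  calc volume (WithLp.toLp 2 ⁻¹' K) = volume K :=
        (PiLp.volume_preserving_toLp (Fin 3)).measure_preimage
          (isClosed_collar _ _ _ _).measurableSet.nullMeasurableSet
    _ ≤ ENNReal.ofReal (4 * π * (u * (k + R) + 2) * (k + R + 2) * (k + R + 2 - (k - R - 2))) :=
        volume_collar_le he' (by linarith) (by positivity) (by positivity)
    _ ≤ _ := ENNReal.ofReal_le_ofReal (collar_volume_bound_le hR hκ hκκ₀ hδ hN)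
end
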